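/- For α > 2, d > 0, T ≥ 0 and s > 0, ∫_{ℝ²} (1 - 1/(1 + s‖x‖^{-α})) dx = (2/α)·π²·s^{2/α}·csc(2π/α), where the integral is over x ∈ ℝ² with Lebesgue measure. -/

import Mathlib

/-!
In polar coordinates the integral is `2π ∫₀^∞ r (1 - 1/(1 + s r^(-α))) dr`. The substitution
`r = (s u)^(1/α)` turns this radial integral into `s^(2/α)/α` times the Mellin transform
`∫₀^∞ u^(p-1)/(1+u) du` at `p = 2/α ∈ (0, 1)`, and `u = x/(1-x)` identifies that Mellin
transform with the beta integral `B(p, 1-p) = Γ(p) Γ(1-p) = π / sin(π p)` (Euler's reflection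
formula).
-/

open Real MeasureTheory Set

theorem intervalIntegral_rpow_mul_one_sub_rpow_eq_beta {a b : ℝ} (ha : 0 < a) (hb : 0 < b) :
    ∫ x in (0:ℝ)..1, x ^ (a - 1) * (1 - x) ^ (b - 1) = ProbabilityTheory.beta a b := by
  suffices h : ((∫ x in (0:ℝ)..1, x ^ (a - 1) * (1 - x) ^ (b - 1) : ℝ) : ℂ)
      = Complex.betaIntegral a b by
    rw [ProbabilityTheory.beta_eq_betaIntegralReal a b ha hb, ← h, Complex.ofReal_re]
  rw [Complex.betaIntegral, ← intervalIntegral.integral_ofReal]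
  refine intervalIntegral.integral_congr_ae (Filter.Eventually.of_forall fun x hx => ?_)
  rw [uIoc_of_le zero_le_one] at hx
  rw [Complex.ofReal_mul, Complex.ofReal_cpow hx.1.le, Complex.ofReal_cpow (by linarith [hx.2])]
  push_cast
  rfl

theorem image_div_one_sub_Ioo : (fun x : ℝ => x / (1 - x)) '' Ioo 0 1 = Ioi 0 := by
  ext t
  constructor
  · rintro ⟨x, ⟨hx0, hx1⟩, rfl⟩
    exact div_pos hx0 (sub_pos.2 hx1)
  · intro (ht : 0 < t)
    refine ⟨t / (1 + t), ⟨by positivity, (div_lt_one (by positivity)).2 (by linarith)⟩, ?_⟩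
    field_simp
    ring

theorem integral_Ioi_rpow_mul_one_add_rpow_eq_beta {a b : ℝ} (ha : 0 < a) (hb : 0 < b) :
    ∫ t in Ioi 0, t ^ (a - 1) * (1 + t) ^ (-(a + b)) = ProbabilityTheory.beta a b := by
  have hderiv : ∀ x ∈ Ioo (0:ℝ) 1,
      HasDerivWithinAt (fun x => x / (1 - x)) ((1 - x) ^ 2)⁻¹ (Ioo 0 1) x := by
    intro x hx
    have h1x : (1:ℝ) - x ≠ 0 := (sub_pos.2 hx.2).ne'
    refine (((hasDerivAt_id' x).div ((hasDerivAt_id' x).const_sub 1) h1x).congr_deriv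
      ?_).hasDerivWithinAt
    field_simp
    ring
  have hinj : InjOn (fun x : ℝ => x / (1 - x)) (Ioo 0 1) := by
    intro x hx y hy hxy
    have := (sub_pos.2 hx.2).ne'
    have := (sub_pos.2 hy.2).ne'
    field_simp at hxy
    linarith
  rw [← image_div_one_sub_Ioo, integral_image_eq_integral_abs_deriv_smul measurableSet_Ioo
    hderiv hinj, ← intervalIntegral_rpow_mul_one_sub_rpow_eq_beta ha hb,
    intervalIntegral.integral_of_le zero_le_one, integral_Ioc_eq_integral_Ioo]
  refine setIntegral_congr_fun measurableSet_Ioo fun x ⟨hx0, hx1⟩ => ?_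
  have hy : 0 < 1 - x := sub_pos.2 hx1
  have hsplit : (1 - x) ^ (a + b) = (1 - x) ^ (a - 1) * (1 - x) ^ (b - 1) * (1 - x) ^ 2 := by
    rw [← rpow_natCast, ← rpow_add hy, ← rpow_add hy]
    ring_nf
  have hone_add : 1 + x / (1 - x) = (1 - x)⁻¹ := by field_simp; ring
  rw [smul_eq_mul, hone_add, inv_rpow hy.le, rpow_neg hy.le, inv_inv, hsplit,
    div_rpow hx0.le hy.le, abs_of_pos (by positivity)]
  have := (rpow_pos_of_pos hy (a - 1)).ne'
  field_simp

theorem integral_Ioi_rpow_div_one_add {p : ℝ} (hp0 : 0 < p) (hp1 : p < 1) :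
    ∫ t in Ioi 0, t ^ (p - 1) / (1 + t) = π / sin (π * p) := by
  have h := integral_Ioi_rpow_mul_one_add_rpow_eq_beta hp0 (sub_pos.2 hp1)
  rw [ProbabilityTheory.beta, add_sub_cancel, Gamma_one, div_one, Gamma_mul_Gamma_one_sub] at h
  rw [← h]
  refine setIntegral_congr_fun measurableSet_Ioi fun t (ht : 0 < t) => ?_
  rw [rpow_neg_one, div_eq_mul_inv]

theorem integral_Ioi_rpow_mul_one_sub_one_div_one_add_mul_rpow_neg {α β s : ℝ} (hβ : 0 < β)
    (hβα : β < α) (hs : 0 < s) :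
    ∫ r in Ioi 0, r ^ (β - 1) * (1 - 1 / (1 + s * r ^ (-α)))
      = s ^ (β / α) / α * (π / sin (π * (β / α))) := by
  have hα : 0 < α := hβ.trans hβα
  have hq0 : 0 < β / α := div_pos hβ hα
  have hq1 : β / α < 1 := (div_lt_one hα).2 hβα
  rw [← integral_comp_rpow_Ioi _ (one_div_pos.2 hα).ne']
  have hscale := integral_comp_mul_left_Ioi (fun x => x ^ (β / α - 1) / (1 + x / s)) 0 hs
  rw [mul_zero] at hscale
  calc ∫ x in Ioi 0, (|1 / α| * x ^ (1 / α - 1)) •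
          ((x ^ (1 / α)) ^ (β - 1) * (1 - 1 / (1 + s * (x ^ (1 / α)) ^ (-α))))
      = ∫ x in Ioi 0, α⁻¹ * (x ^ (β / α - 1) / (1 + x / s)) := by
        refine setIntegral_congr_fun measurableSet_Ioi fun x (hx : 0 < x) => ?_
        rw [smul_eq_mul, abs_of_pos (one_div_pos.2 hα), ← rpow_mul hx.le, ← rpow_mul hx.le,
          show 1 / α * -α = -1 by field_simp, rpow_neg_one]
        have hpow : x ^ (1 / α - 1) * x ^ (1 / α * (β - 1)) = x ^ (β / α - 1) := by
          rw [← rpow_add hx]; ring_nf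
        rw [← hpow]
        field_simp
        ring
    _ = α⁻¹ * (s * ∫ u in Ioi 0, (s * u) ^ (β / α - 1) / (1 + s * u / s)) := by
        rw [integral_const_mul, hscale, smul_eq_mul, mul_inv_cancel_left₀ hs.ne']
    _ = α⁻¹ * (s * ∫ u in Ioi 0, s ^ (β / α - 1) * (u ^ (β / α - 1) / (1 + u))) := by
        congr 2
        refine setIntegral_congr_fun measurableSet_Ioi fun u (hu : 0 < u) => ?_
        rw [mul_rpow hs.le hu.le, mul_div_cancel_left₀ _ hs.ne', mul_div_assoc]
    _ = s ^ (β / α) / α * (π / sin (π * (β / α))) := by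
        rw [integral_const_mul, integral_Ioi_rpow_div_one_add hq0 hq1, ← mul_assoc s,
          ← rpow_one_add' hs.le (by simp [hβ.ne', hα.ne']), add_sub_cancel]
        ring

theorem stmt_17 (α : ℝ) (hα : 2 < α) (s : ℝ) (hs : 0 < s) :
    ∫ x : EuclideanSpace ℝ (Fin 2), (1 - 1 / (1 + s * ‖x‖ ^ (-α)))
      = 2 / α * π ^ 2 * s ^ (2 / α) * (1 / Real.sin (2 * π / α)) := by
  have hball : volume.real (Metric.ball (0 : EuclideanSpace ℝ (Fin 2)) 1) = π := by
    simp [measureReal_def, pi_pos.le]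
  have hradial : ∫ r in Ioi 0, r ^ (2 - 1) • (1 - 1 / (1 + s * r ^ (-α)))
      = ∫ r in Ioi 0, r ^ ((2:ℝ) - 1) * (1 - 1 / (1 + s * r ^ (-α))) := by
    norm_num
  rw [integral_fun_norm_addHaar volume (fun r => 1 - 1 / (1 + s * r ^ (-α))),
    finrank_euclideanSpace_fin, hball, hradial,
    integral_Ioi_rpow_mul_one_sub_one_div_one_add_mul_rpow_neg two_pos hα hs,
    nsmul_eq_mul, smul_eq_mul, show 2 * π / α = π * (2 / α) by ring]
  push_cast
  ring
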